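/- Existence part of Skorokhod's lemma: Let b : [0,∞) → ℝ be continuous with b(0) = 0, let x₀ ≥ 0, and set m(t) = min_{0 ≤ t' ≤ t} b(t'), l(t) = max(0, −m(t) − x₀), and x(t) = x₀ + b(t) + l(t). Then x and l are continuous, x(0) = x₀, x(t) ≥ 0 for all t ≥ 0, l(0) = 0, l is non-decreasing, l is constant on every interval on which x is strictly positive, and x(t) = x₀ + l(t) + b(t) for all t ≥ 0. -/

import Mathlib

open Set

/-!
The running infimum `m` of a continuous path is continuous (write it as the infimum of
`s ↦ b (s * t)` over the compact `[0, 1]`), antitone and bounded by `b`, so `l = max 0 (-m - x₀)`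
is continuous, monotone and makes `x = x₀ + b + l ≥ b - m ≥ 0`. If `x > 0` on `[t₁, t₂]` and the
minimum of `b` over `[0, t₂]` is attained at some `u > t₁`, then `m u = b u`, so `x u > 0` forces
`x₀ + m t₂ > 0`, i.e. `l t₂ = 0`; otherwise `m t₁ = m t₂`. Either way `l t₁ = l t₂`.
-/

noncomputable def runningInf {α : Type*} [InfSet α] (f : ℝ → α) (t : ℝ) : α :=
  sInf (f '' Icc 0 t)

theorem runningInf_zero {α : Type*} [ConditionallyCompleteLattice α] (f : ℝ → α) :
    runningInf f 0 = f 0 := by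
  simp [runningInf]

section RunningInf

variable {α : Type*} [ConditionallyCompleteLinearOrder α] [TopologicalSpace α] [OrderTopology α]
  {f : ℝ → α}

theorem runningInf_le (hf : ContinuousOn f (Ici 0)) {s t : ℝ} (hs : s ∈ Icc 0 t) :
    runningInf f t ≤ f s :=
  (hf.mono Icc_subset_Ici_self).sInf_image_Icc_le hs

theorem exists_eq_runningInf (hf : ContinuousOn f (Ici 0)) {t : ℝ} (ht : 0 ≤ t) :
    ∃ s ∈ Icc 0 t, f s = runningInf f t :=
  (isCompact_Icc.image_of_continuousOn (hf.mono Icc_subset_Ici_self)).sInf_mem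
    ((nonempty_Icc.2 ht).image f)

theorem antitoneOn_runningInf (hf : ContinuousOn f (Ici 0)) : AntitoneOn (runningInf f) (Ici 0) :=
  fun _ hs _ _ hst =>
    csInf_le_csInf (isCompact_Icc.image_of_continuousOn (hf.mono Icc_subset_Ici_self)).bddBelow
      ((nonempty_Icc.2 (mem_Ici.1 hs)).image f) (image_mono (Icc_subset_Icc_right hst))

theorem continuousOn_runningInf (hf : ContinuousOn f (Ici 0)) :
    ContinuousOn (runningInf f) (Ici 0) := by
  set g : ℝ → α := fun t => f (max t 0)
  have hg : Continuous g :=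
    hf.comp_continuous (continuous_id.max continuous_const) fun t => le_max_right t 0
  have hscaled : Continuous fun t => sInf ((fun s => g (s * t)) '' Icc 0 1) :=
    isCompact_Icc.continuous_sInf (hg.comp (continuous_snd.mul continuous_fst))
  refine hscaled.continuousOn.congr fun t (ht : 0 ≤ t) => ?_
  have hfg : EqOn f g (Icc 0 t) := fun s hs => by simp only [g, max_eq_left hs.1]
  show sInf (f '' Icc 0 t) = sInf ((fun s => g (s * t)) '' Icc 0 1)
  rw [← image_image g (· * t), image_mul_right_Icc zero_le_one ht, zero_mul, one_mul,
    hfg.image_eq]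

end RunningInf

section Skorokhod

variable {b : ℝ → ℝ} {x₀ : ℝ}

noncomputable def skorokhodRegulator (b : ℝ → ℝ) (x₀ t : ℝ) : ℝ :=
  max 0 (-runningInf b t - x₀)

theorem skorokhodRegulator_zero (hb0 : b 0 = 0) (hx₀ : 0 ≤ x₀) : skorokhodRegulator b x₀ 0 = 0 := by
  simp [skorokhodRegulator, runningInf_zero, hb0, hx₀]

theorem continuousOn_skorokhodRegulator (hb : ContinuousOn b (Ici 0)) :
    ContinuousOn (skorokhodRegulator b x₀) (Ici 0) :=
  continuousOn_const.sup ((continuousOn_runningInf hb).neg.sub continuousOn_const)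

theorem monotoneOn_skorokhodRegulator (hb : ContinuousOn b (Ici 0)) :
    MonotoneOn (skorokhodRegulator b x₀) (Ici 0) := fun s hs t ht hst =>
  max_le_max le_rfl (by linarith [antitoneOn_runningInf hb hs ht hst])

theorem add_skorokhodRegulator_nonneg (hb : ContinuousOn b (Ici 0)) {t : ℝ} (ht : 0 ≤ t) :
    0 ≤ x₀ + b t + skorokhodRegulator b x₀ t := by
  have hmb : runningInf b t ≤ b t := runningInf_le hb ⟨ht, le_rfl⟩
  have hl : -runningInf b t - x₀ ≤ skorokhodRegulator b x₀ t := le_max_right _ _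
  linarith

theorem skorokhodRegulator_eq_of_pos (hb : ContinuousOn b (Ici 0)) {t₁ t₂ : ℝ} (ht₁ : 0 ≤ t₁)
    (ht₁₂ : t₁ ≤ t₂) (hpos : ∀ u ∈ Icc t₁ t₂, 0 < x₀ + b u + skorokhodRegulator b x₀ u) :
    skorokhodRegulator b x₀ t₁ = skorokhodRegulator b x₀ t₂ := by
  have ht₂ : 0 ≤ t₂ := ht₁.trans ht₁₂
  obtain ⟨u, hu, hbu⟩ := exists_eq_runningInf hb ht₂
  rcases le_or_gt u t₁ with hut₁ | ht₁u
  · have hm : runningInf b t₁ = runningInf b t₂ :=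
      le_antisymm (hbu ▸ runningInf_le hb ⟨hu.1, hut₁⟩) (antitoneOn_runningInf hb ht₁ ht₂ ht₁₂)
    simp only [skorokhodRegulator, hm]
  · have hmu : runningInf b u = b u :=
      le_antisymm (runningInf_le hb ⟨hu.1, le_rfl⟩) (hbu ▸ antitoneOn_runningInf hb hu.1 ht₂ hu.2)
    have hxu := hpos u ⟨ht₁u.le, hu.2⟩
    have hreflected : 0 < x₀ + b u := by
      by_contra! h
      rw [skorokhodRegulator, hmu, max_eq_right (by linarith)] at hxu
      linarith
    have hl₂ : skorokhodRegulator b x₀ t₂ = 0 := max_eq_left (by linarith)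
    have hl₁ : 0 ≤ skorokhodRegulator b x₀ t₁ := le_max_left _ _
    linarith [monotoneOn_skorokhodRegulator (x₀ := x₀) hb ht₁ ht₂ ht₁₂]

end Skorokhod

/-- **Existence part of Skorokhod's lemma**: for `b` continuous on `[0, ∞)` with `b 0 = 0`
and `x₀ ≥ 0`, the functions `m t = min_{0 ≤ t' ≤ t} b t'`, `l t = max 0 (-m t - x₀)` and
`x t = x₀ + b t + l t` satisfy: `x` and `l` are continuous on `[0, ∞)`, `x 0 = x₀`,
`x t ≥ 0` for all `t ≥ 0`, `l 0 = 0`, `l` is non-decreasing on `[0, ∞)`, `l` is constant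
on every interval on which `x` is strictly positive, and `x t = x₀ + l t + b t` for `t ≥ 0`. -/
theorem skorokhod_existence (b : ℝ → ℝ) (hb : ContinuousOn b (Ici 0)) (hb0 : b 0 = 0)
    (x₀ : ℝ) (hx₀ : 0 ≤ x₀) (m l x : ℝ → ℝ)
    (hm : ∀ t, m t = sInf (b '' Icc 0 t))
    (hl : ∀ t, l t = max 0 (-(m t) - x₀))
    (hx : ∀ t, x t = x₀ + b t + l t) :
    ContinuousOn x (Ici 0) ∧ ContinuousOn l (Ici 0) ∧
    x 0 = x₀ ∧ (∀ t, 0 ≤ t → 0 ≤ x t) ∧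
    l 0 = 0 ∧ (∀ t₁ t₂, 0 ≤ t₁ → t₁ ≤ t₂ → l t₁ ≤ l t₂) ∧
    (∀ t₁ t₂, 0 ≤ t₁ → t₁ ≤ t₂ → (∀ u, t₁ ≤ u → u ≤ t₂ → 0 < x u) → l t₁ = l t₂) ∧
    (∀ t, 0 ≤ t → x t = x₀ + l t + b t) := by
  obtain rfl : m = runningInf b := funext hm
  obtain rfl : l = skorokhodRegulator b x₀ := funext hl
  obtain rfl : x = fun t => x₀ + b t + skorokhodRegulator b x₀ t := funext hx
  refine ⟨(continuousOn_const.add hb).add (continuousOn_skorokhodRegulator hb),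
    continuousOn_skorokhodRegulator hb, ?_, fun t => add_skorokhodRegulator_nonneg hb,
    skorokhodRegulator_zero hb0 hx₀,
    fun t₁ t₂ ht₁ ht₁₂ => monotoneOn_skorokhodRegulator hb ht₁ (ht₁.trans ht₁₂) ht₁₂,
    fun t₁ t₂ ht₁ ht₁₂ hpos =>
      skorokhodRegulator_eq_of_pos hb ht₁ ht₁₂ fun u hu => hpos u hu.1 hu.2,
    fun t _ => add_right_comm _ _ _⟩
  simp [skorokhodRegulator_zero hb0 hx₀, hb0]
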